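/- arXiv:2101.04993 — 4 statements merged into one kernel-verified Lean document; each statement's English description precedes it below -/
import Mathlib

section
/- Fix real parameters α, β, γ_r, γ_i, c, d, q, ρ and a > 0, and let Λ̂(k) be the associated symbol matrix. For every δ ∈ (0,1) there exist constants c̃₁ > 0 and c̃₂ > 0 such that for all k ∈ ℝ with |k| ≥ δ and all V ∈ ℂ³, Re ⟨V, Λ̂(k) V⟩ ≤ c̃₁ |k| |V|² - c̃₂ k² |V|², where ⟨·,·⟩ is the standard Hermitian inner product on ℂ³ and |V| the associated norm. -/
/-!
`Re ⟨V, Λ̂ V⟩` only sees the Hermitian part `(Λ̂ + Λ̂ᴴ)/2`. Its diagonal has real parts at most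
`-min 1 a * k²`. The entries `Λ̂₀₁` and `Λ̂₁₀` grow like `k²`, but their leading terms cancel in
`Λ̂₀₁ + conj Λ̂₁₀`, so all off-diagonal entries of the Hermitian part are `O(1 + |k|)`. With
`|V_i| |V_j| ≤ (|V_i|² + |V_j|²) / 2` this gives `Re ⟨V, Λ̂ V⟩ ≤ (C (1 + |k|) - min 1 a * k²) |V|²`,
and for `|k| ≥ δ` the constant is absorbed through `1 ≤ |k| / δ`.
-/

/-- The Fourier symbol `Λ̂(k)` of the linearization of the modulation system about the wave
train, after the change of variables `ψ = √(1-∂ₓ²) v`. -/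
noncomputable def symbolMatrix (α β γr γi c d a q ρ : ℝ) (k : ℝ) : Matrix (Fin 3) (Fin 3) ℂ :=
  !![-(k : ℂ) ^ 2 - 2 * (Real.exp (2 * ρ) : ℂ) - 2 * Complex.I * (α : ℂ) * (q : ℂ) * (k : ℂ),
      (-(Complex.I * (α : ℂ) * (k : ℂ)) - 2 * (q : ℂ)) * (Real.sqrt (1 + k ^ 2) : ℂ),
      (γr : ℂ);
    (-(Complex.I * (α : ℂ) * (k : ℂ) ^ 3)
        - 2 * Complex.I * (β : ℂ) * (Real.exp (2 * ρ) : ℂ) * (k : ℂ)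
        - 2 * (q : ℂ) * (k : ℂ) ^ 2) / (Real.sqrt (1 + k ^ 2) : ℂ),
      -(k : ℂ) ^ 2 - 2 * Complex.I * (α : ℂ) * (q : ℂ) * (k : ℂ),
      Complex.I * (γi : ℂ) * (k : ℂ) / (Real.sqrt (1 + k ^ 2) : ℂ);
    2 * Complex.I * (d : ℂ) * (Real.exp (2 * ρ) : ℂ) * (k : ℂ),
      0,
      -(a : ℂ) * (k : ℂ) ^ 2 + Complex.I * (c : ℂ) * (k : ℂ)]

open ComplexConjugate Finset

section HermitianPart

variable {ι : Type*} [Fintype ι]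

theorem re_sum_conj_mul_mulVec_eq_half_sum_add_conj (A : Matrix ι ι ℂ) (V : ι → ℂ) :
    (∑ i, conj (V i) * A.mulVec V i).re =
      ∑ i, ∑ j, (conj (V i) * (A i j + conj (A j i)) * V j).re / 2 := by
  have hswap : ∑ i, ∑ j, (conj (V i) * (conj (A j i) * V j)).re =
      ∑ i, ∑ j, (conj (V i) * (A i j * V j)).re := by
    rw [sum_comm]
    refine sum_congr rfl fun i _ => sum_congr rfl fun j _ => ?_
    rw [← Complex.conj_re]
    simp only [map_mul, Complex.conj_conj]
    ring_nf
  simp only [Matrix.mulVec, dotProduct, mul_sum, Complex.re_sum, mul_add, add_mul,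
    Complex.add_re, add_div, sum_add_distrib, ← sum_div, mul_assoc]
  rw [hswap]
  ring

theorem re_conj_mul_mul_le (z u w : ℂ) :
    (conj z * u * w).re ≤ ‖u‖ * ((‖z‖ ^ 2 + ‖w‖ ^ 2) / 2) :=
  calc (conj z * u * w).re ≤ ‖conj z * u * w‖ := Complex.re_le_norm _
    _ = ‖u‖ * (‖z‖ * ‖w‖) := by rw [norm_mul, norm_mul, Complex.norm_conj]; ring
    _ ≤ ‖u‖ * ((‖z‖ ^ 2 + ‖w‖ ^ 2) / 2) := by
      gcongr; nlinarith [sq_nonneg (‖z‖ - ‖w‖)]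

theorem re_sum_conj_mul_mulVec_le [DecidableEq ι] (A : Matrix ι ι ℂ) (V : ι → ℂ) {μ K : ℝ}
    (hK : 0 ≤ K) (hdiag : ∀ i, (A i i).re ≤ -μ)
    (hoff : ∀ i j, i ≠ j → ‖A i j + conj (A j i)‖ ≤ K) :
    (∑ i, conj (V i) * A.mulVec V i).re ≤ (Fintype.card ι * K / 2 - μ) * ∑ i, ‖V i‖ ^ 2 := by
  have hterm : ∀ i j, (conj (V i) * (A i j + conj (A j i)) * V j).re / 2 ≤
      (if i = j then -μ * ‖V i‖ ^ 2 else 0) + K / 4 * (‖V i‖ ^ 2 + ‖V j‖ ^ 2) := by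
    intro i j
    split_ifs with hij
    · subst hij
      have hre : conj (V i) * (A i i + conj (A i i)) * V i =
          ((2 * (A i i).re * ‖V i‖ ^ 2 : ℝ) : ℂ) := by
        rw [Complex.add_conj, mul_comm (conj (V i)), mul_assoc, Complex.conj_mul']
        push_cast; ring
      rw [hre, Complex.ofReal_re]
      nlinarith [hdiag i, sq_nonneg ‖V i‖]
    · nlinarith [re_conj_mul_mul_le (V i) (A i j + conj (A j i)) (V j), hoff i j hij,
        sq_nonneg ‖V i‖, sq_nonneg ‖V j‖]
  calc (∑ i, conj (V i) * A.mulVec V i).re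
      = ∑ i, ∑ j, (conj (V i) * (A i j + conj (A j i)) * V j).re / 2 :=
        re_sum_conj_mul_mulVec_eq_half_sum_add_conj A V
    _ ≤ ∑ i, ∑ j, ((if i = j then -μ * ‖V i‖ ^ 2 else 0) +
          K / 4 * (‖V i‖ ^ 2 + ‖V j‖ ^ 2)) := by
        gcongr with i _ j _; exact hterm i j
    _ = (Fintype.card ι * K / 2 - μ) * ∑ i, ‖V i‖ ^ 2 := by
        simp only [sum_add_distrib, sum_ite_eq, mem_univ, if_true,
          ← mul_sum, sum_const, card_univ, nsmul_eq_mul]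
        ring

end HermitianPart

theorem norm_ofReal_add_ofReal_mul_I_le (x y : ℝ) : ‖(x : ℂ) + y * Complex.I‖ ≤ |x| + |y| := by
  simpa using Complex.norm_le_abs_re_add_abs_im ((x : ℂ) + y * Complex.I)

section Symbol

variable (α β γr γi c d a q ρ k : ℝ)

theorem symbolMatrix_re_diag_le (i : Fin 3) :
    (symbolMatrix α β γr γi c d a q ρ k i i).re ≤ -(min 1 a * k ^ 2) := by
  have hk := sq_nonneg k
  have h1 := min_le_left 1 a
  have h2 := min_le_right 1 a
  have he := Real.exp_pos (2 * ρ)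
  fin_cases i <;>
    simp only [symbolMatrix, Fin.zero_eta, Fin.mk_one, Fin.reduceFinMk, Fin.isValue,
      Matrix.of_apply, Matrix.cons_val', Matrix.cons_val, Matrix.cons_val_zero, Matrix.cons_val_one,
      Matrix.cons_val_fin_one, ← Complex.ofReal_pow, Complex.add_re, Complex.sub_re,
      Complex.neg_re, Complex.mul_re, Complex.mul_im, Complex.ofReal_re, Complex.ofReal_im,
      Complex.re_ofNat, Complex.im_ofNat, Complex.I_re, Complex.I_im] <;>
    nlinarith

theorem symbolMatrix_zero_one_add_conj :
    symbolMatrix α β γr γi c d a q ρ k 0 1 + conj (symbolMatrix α β γr γi c d a q ρ k 1 0) =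
      ((-2 * q * (1 + 2 * k ^ 2) : ℝ) + ((2 * β * Real.exp (2 * ρ) - α) * k : ℝ) * Complex.I) /
        (Real.sqrt (1 + k ^ 2) : ℝ) := by
  have hs : (Real.sqrt (1 + k ^ 2) : ℂ) ^ 2 = 1 + (k : ℂ) ^ 2 := by
    rw [← Complex.ofReal_pow, Real.sq_sqrt (by positivity)]; push_cast; ring
  have hs0 : (Real.sqrt (1 + k ^ 2) : ℂ) ≠ 0 := by
    exact_mod_cast (Real.sqrt_pos.2 (by positivity : (0:ℝ) < 1 + k ^ 2)).ne'
  simp only [symbolMatrix, Matrix.of_apply, Matrix.cons_val', Matrix.cons_val_zero,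
    Matrix.cons_val_one, Matrix.empty_val', Matrix.cons_val_fin_one, map_div₀, map_sub, map_mul,
    map_neg, map_pow, map_ofNat, Complex.conj_I, Complex.conj_ofReal]
  field_simp
  push_cast
  linear_combination (-(Complex.I * α * k) - 2 * q) * hs

theorem symbolMatrix_zero_two_add_conj :
    symbolMatrix α β γr γi c d a q ρ k 0 2 + conj (symbolMatrix α β γr γi c d a q ρ k 2 0) =
      (γr : ℂ) + ((-2 * d * Real.exp (2 * ρ) * k : ℝ) : ℂ) * Complex.I := by
  simp only [symbolMatrix, Fin.isValue, Matrix.of_apply, Matrix.cons_val', Matrix.cons_val,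
    Matrix.cons_val_fin_one, Matrix.cons_val_zero, map_mul, map_ofNat, Complex.conj_I,
    Complex.conj_ofReal]
  push_cast
  ring

theorem symbolMatrix_one_two_add_conj :
    symbolMatrix α β γr γi c d a q ρ k 1 2 + conj (symbolMatrix α β γr γi c d a q ρ k 2 1) =
      ((γi * k / Real.sqrt (1 + k ^ 2) : ℝ) : ℂ) * Complex.I := by
  simp only [symbolMatrix, Fin.isValue, Matrix.of_apply, Matrix.cons_val', Matrix.cons_val,
    Matrix.cons_val_fin_one, Matrix.cons_val_one, Matrix.cons_val_zero, map_zero, add_zero]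
  push_cast
  ring

theorem sqrt_one_add_sq_bounds :
    1 ≤ Real.sqrt (1 + k ^ 2) ∧ |k| ≤ Real.sqrt (1 + k ^ 2) ∧ Real.sqrt (1 + k ^ 2) ≤ 1 + |k| := by
  have hs2 : Real.sqrt (1 + k ^ 2) ^ 2 = 1 + k ^ 2 := Real.sq_sqrt (by positivity)
  have hs0 := Real.sqrt_nonneg (1 + k ^ 2)
  have hk := abs_nonneg k
  have hk2 := sq_abs k
  refine ⟨?_, ?_, ?_⟩ <;> nlinarith

theorem norm_symbolMatrix_zero_one_add_conj_le :
    ‖symbolMatrix α β γr γi c d a q ρ k 0 1 + conj (symbolMatrix α β γr γi c d a q ρ k 1 0)‖ ≤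
      (4 * |q| + |2 * β * Real.exp (2 * ρ) - α|) * (1 + |k|) := by
  obtain ⟨hs1, hks, hsk⟩ := sqrt_one_add_sq_bounds k
  have hs2 : Real.sqrt (1 + k ^ 2) ^ 2 = 1 + k ^ 2 := Real.sq_sqrt (by positivity)
  rw [symbolMatrix_zero_one_add_conj, norm_div, Complex.norm_real,
    Real.norm_of_nonneg (Real.sqrt_nonneg _), div_le_iff₀ (by linarith)]
  refine (norm_ofReal_add_ofReal_mul_I_le _ _).trans ?_
  set s := Real.sqrt (1 + k ^ 2)
  rw [abs_mul, abs_mul, abs_mul, abs_of_pos (by positivity : (0 : ℝ) < 1 + 2 * k ^ 2),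
    abs_neg, abs_two]
  have h1 : 1 + k ^ 2 ≤ (1 + |k|) * s := by nlinarith
  have h2 : |k| ≤ (1 + |k|) * s := by nlinarith [abs_nonneg k]
  nlinarith [mul_le_mul_of_nonneg_left h1 (abs_nonneg q), abs_nonneg q,
    mul_le_mul_of_nonneg_left h2 (abs_nonneg (2 * β * Real.exp (2 * ρ) - α))]

theorem norm_symbolMatrix_zero_two_add_conj_le :
    ‖symbolMatrix α β γr γi c d a q ρ k 0 2 + conj (symbolMatrix α β γr γi c d a q ρ k 2 0)‖ ≤
      (|γr| + 2 * |d| * Real.exp (2 * ρ)) * (1 + |k|) := by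
  rw [symbolMatrix_zero_two_add_conj]
  refine (norm_ofReal_add_ofReal_mul_I_le _ _).trans ?_
  rw [abs_mul, abs_mul, abs_mul, abs_neg, abs_two, abs_of_pos (Real.exp_pos _)]
  nlinarith [abs_nonneg γr, abs_nonneg k, mul_nonneg (abs_nonneg d) (Real.exp_pos (2 * ρ)).le]

theorem norm_symbolMatrix_one_two_add_conj_le :
    ‖symbolMatrix α β γr γi c d a q ρ k 1 2 + conj (symbolMatrix α β γr γi c d a q ρ k 2 1)‖ ≤
      |γi| * (1 + |k|) := by
  obtain ⟨hs1, hks, -⟩ := sqrt_one_add_sq_bounds k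
  rw [symbolMatrix_one_two_add_conj, norm_mul, Complex.norm_I, mul_one, Complex.norm_real,
    Real.norm_eq_abs, abs_div, abs_mul, abs_of_pos (show 0 < Real.sqrt (1 + k ^ 2) by linarith),
    div_le_iff₀ (by linarith)]
  nlinarith [mul_le_mul_of_nonneg_left hks (abs_nonneg γi),
    mul_nonneg (mul_nonneg (abs_nonneg γi) (abs_nonneg k)) (Real.sqrt_nonneg (1 + k ^ 2))]

theorem norm_symbolMatrix_add_conj_le {i j : Fin 3} (hij : i ≠ j) :
    ‖symbolMatrix α β γr γi c d a q ρ k i j + conj (symbolMatrix α β γr γi c d a q ρ k j i)‖ ≤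
      (4 * |q| + |2 * β * Real.exp (2 * ρ) - α| + |γr| + 2 * |d| * Real.exp (2 * ρ) + |γi|) *
        (1 + |k|) := by
  have h01 := norm_symbolMatrix_zero_one_add_conj_le α β γr γi c d a q ρ k
  have h02 := norm_symbolMatrix_zero_two_add_conj_le α β γr γi c d a q ρ k
  have h12 := norm_symbolMatrix_one_two_add_conj_le α β γr γi c d a q ρ k
  have hswap (z w : ℂ) : ‖z + conj w‖ = ‖w + conj z‖ := by
    rw [← Complex.norm_conj, map_add, Complex.conj_conj, add_comm]
  have hγ : 0 ≤ (|γr| + 2 * |d| * Real.exp (2 * ρ)) * (1 + |k|) := by positivity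
  have hq : 0 ≤ (4 * |q| + |2 * β * Real.exp (2 * ρ) - α|) * (1 + |k|) := by positivity
  have hi : 0 ≤ |γi| * (1 + |k|) := by positivity
  fin_cases i <;> fin_cases j <;> simp only [Fin.zero_eta, Fin.mk_one, Fin.reduceFinMk] at hij ⊢
  all_goals first
    | exact absurd rfl hij
    | linarith
    | (rw [hswap]; linarith)

end Symbol

/-- High-frequency parabolic estimate for the symbol `Λ̂(k)`: for every
`δ ∈ (0,1)` there are `c̃₁, c̃₂ > 0` such that for all `|k| ≥ δ` and `V ∈ ℂ³`,
`Re ⟨V, Λ̂(k)V⟩ ≤ c̃₁|k||V|² - c̃₂k²|V|²`. -/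
theorem symbol_high_frequency_estimate (α β γr γi c d a q ρ : ℝ) (ha : 0 < a)
    (δ : ℝ) (hδ : δ ∈ Set.Ioo (0:ℝ) 1) :
    ∃ c₁ c₂ : ℝ, 0 < c₁ ∧ 0 < c₂ ∧
      ∀ k : ℝ, δ ≤ |k| → ∀ V : Fin 3 → ℂ,
        (∑ i : Fin 3,
            (starRingEnd ℂ) (V i) * (symbolMatrix α β γr γi c d a q ρ k).mulVec V i).re ≤
          c₁ * |k| * (∑ i : Fin 3, ‖V i‖ ^ 2) - c₂ * k ^ 2 * (∑ i : Fin 3, ‖V i‖ ^ 2) := by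
  obtain ⟨hδ0, -⟩ := hδ
  set C := 4 * |q| + |2 * β * Real.exp (2 * ρ) - α| + |γr| + 2 * |d| * Real.exp (2 * ρ) + |γi|
  have hC : 0 ≤ C := by positivity
  refine ⟨3 * C * (1 + δ⁻¹) / 2 + 1, min 1 a, by positivity, lt_min one_pos ha, fun k hk V => ?_⟩
  have hform := re_sum_conj_mul_mulVec_le (symbolMatrix α β γr γi c d a q ρ k) V
    (by positivity) (symbolMatrix_re_diag_le α β γr γi c d a q ρ k)
    (fun _ _ => norm_symbolMatrix_add_conj_le α β γr γi c d a q ρ k)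
  rw [Fintype.card_fin, Nat.cast_ofNat] at hform
  have hk1 : 1 ≤ δ⁻¹ * |k| := by rw [inv_mul_eq_div, le_div_iff₀ hδ0]; linarith
  have hS : 0 ≤ ∑ i, ‖V i‖ ^ 2 := by positivity
  have hcoef : 3 * (C * (1 + |k|)) / 2 ≤ (3 * C * (1 + δ⁻¹) / 2 + 1) * |k| := by
    nlinarith [mul_le_mul_of_nonneg_left hk1 hC, abs_nonneg k]
  linarith [mul_le_mul_of_nonneg_right hcoef hS]
end

section
/- Fix real parameters α, β, γ_r, γ_i, c, d, q, ρ and a > 0, and let Λ̂(k) be the associated symbol matrix. There exist constants δ_Λ ∈ (0,1) and c_{Λ,s} > 0 such that for every k ∈ ℝ with |k| < δ_Λ, the set of eigenvalues λ of Λ̂(k) with Re λ ≤ -c_{Λ,s} consists of exactly one element λ₁(k), and λ₁(k) is a simple root of the characteristic polynomial of Λ̂(k). -/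
open Polynomial Finset Filter Topology

theorem norm_multiset_sum_map_le_card_mul {α E : Type*} [SeminormedAddCommGroup E]
    {t : Multiset α} {f : α → E} {r : ℝ} (h : ∀ x ∈ t, ‖f x‖ ≤ r) :
    ‖(t.map f).sum‖ ≤ Multiset.card t * r := by
  calc ‖(t.map f).sum‖ ≤ ((t.map f).map (‖·‖)).sum := norm_multiset_sum_le _
    _ ≤ Multiset.card t * r := by
      simpa [Multiset.map_map] using
        Multiset.sum_le_card_nsmul (t.map fun x => ‖f x‖) r (by simpa using h)

theorem Multiset.card_filter_norm_add_lt_eq_one {s : Multiset ℂ} {μ : ℂ} {r ε : ℝ}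
    (hs : ∀ z ∈ s, ‖z‖ < r ∨ ‖z + μ‖ < r) (hsum : ‖s.sum + μ‖ ≤ ε)
    (hrμ : Multiset.card s * r + ε < ‖μ‖) :
    Multiset.card (s.filter fun z => ‖z + μ‖ < r) = 1 := by
  set S₁ := s.filter fun z => ‖z + μ‖ < r
  set S₂ := s.filter fun z => ¬‖z + μ‖ < r
  have hsplit : S₁ + S₂ = s := Multiset.filter_add_not _ _
  have h₁ : ‖(S₁.map (· + μ)).sum‖ ≤ Multiset.card S₁ * r :=
    norm_multiset_sum_map_le_card_mul fun z hz => (Multiset.mem_filter.1 hz).2.le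
  have h₂ : ‖(S₂.map id).sum‖ ≤ Multiset.card S₂ * r :=
    norm_multiset_sum_map_le_card_mul fun z hz =>
      ((hs z (Multiset.mem_filter.1 hz).1).resolve_right (Multiset.mem_filter.1 hz).2).le
  have hcard : (Multiset.card S₁ : ℝ) + Multiset.card S₂ = Multiset.card s := by
    rw [← hsplit, Multiset.card_add, Nat.cast_add]
  have hid : ((Multiset.card S₁ : ℂ) - 1) * μ
      = (S₁.map (· + μ)).sum + (S₂.map id).sum - (s.sum + μ) := by
    rw [← hsplit, Multiset.sum_add, Multiset.sum_map_add, Multiset.map_id, Multiset.map_id',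
      Multiset.map_const', Multiset.sum_replicate, nsmul_eq_mul]
    ring
  have hlt : |(Multiset.card S₁ : ℝ) - 1| * ‖μ‖ < 1 * ‖μ‖ := by
    calc |(Multiset.card S₁ : ℝ) - 1| * ‖μ‖ = ‖((Multiset.card S₁ : ℂ) - 1) * μ‖ := by
          rw [norm_mul]; norm_cast
      _ ≤ Multiset.card S₁ * r + Multiset.card S₂ * r + ε := by
          rw [hid]
          exact (norm_sub_le _ _).trans
            (add_le_add ((norm_add_le _ _).trans (add_le_add h₁ h₂)) hsum)
      _ < 1 * ‖μ‖ := by rw [← add_mul, hcard, one_mul]; exact hrμ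
  have hS₁ := abs_sub_lt_iff.1 (lt_of_mul_lt_mul_right hlt (norm_nonneg μ))
  have : Multiset.card S₁ < 2 := by exact_mod_cast (by linarith : (Multiset.card S₁ : ℝ) < 2)
  have : 0 < Multiset.card S₁ := by exact_mod_cast (by linarith : (0 : ℝ) < Multiset.card S₁)
  omega

namespace Polynomial

theorem norm_eval_le_sum_norm_coeff_mul {𝕜 : Type*} [NormedField 𝕜] {p : 𝕜[X]} {n : ℕ}
    (hp : p.natDegree ≤ n) (z : 𝕜) :
    ‖p.eval z‖ ≤ (∑ i ∈ range (n + 1), ‖p.coeff i‖) * max 1 ‖z‖ ^ n := by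
  rw [eval_eq_sum_range' (Nat.lt_succ_of_le hp), sum_mul]
  refine (norm_sum_le _ _).trans (sum_le_sum fun i hi => ?_)
  rw [norm_mul, norm_pow]
  gcongr
  calc ‖z‖ ^ i ≤ max 1 ‖z‖ ^ i := by gcongr; exact le_max_right _ _
    _ ≤ max 1 ‖z‖ ^ n :=
      pow_le_pow_right₀ (le_max_left _ _) (Nat.lt_succ_iff.1 (mem_range.1 hi))

theorem norm_lt_or_norm_add_lt_of_isRoot {𝕜 : Type*} [NormedField 𝕜] {n : ℕ} {μ z : 𝕜}
    {e : 𝕜[X]} {r : ℝ} (he : e.natDegree ≤ n) (hr₀ : 0 ≤ r) (hr₁ : r ≤ 1)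
    (hε : ∑ i ∈ range (n + 1), ‖e.coeff i‖ < r ^ (n + 1))
    (hz : (X ^ n * (X + C μ) + e).IsRoot z) :
    ‖z‖ < r ∨ ‖z + μ‖ < r := by
  set ε := ∑ i ∈ range (n + 1), ‖e.coeff i‖
  have key : ‖z‖ ^ n * ‖z + μ‖ ≤ ε * max 1 ‖z‖ ^ n := by
    have : z ^ n * (z + μ) = -e.eval z := by
      simpa [eq_neg_iff_add_eq_zero] using hz
    rw [← norm_pow, ← norm_mul, this, norm_neg]
    exact norm_eval_le_sum_norm_coeff_mul he z
  rcases le_or_gt 1 ‖z‖ with hz₁ | hz₁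
  · right
    rw [max_eq_right hz₁, mul_comm] at key
    calc ‖z + μ‖ ≤ ε := le_of_mul_le_mul_right key (pow_pos (one_pos.trans_le hz₁) _)
      _ < r ^ (n + 1) := hε
      _ ≤ r := pow_le_of_le_one hr₀ hr₁ n.succ_ne_zero
  · rw [max_eq_left hz₁.le, one_pow, mul_one] at key
    by_contra! h
    have : r ^ (n + 1) ≤ ‖z‖ ^ n * ‖z + μ‖ := by
      rw [pow_succ]; gcongr; exacts [h.1, h.2]
    linarith

theorem exists_rootMultiplicity_eq_one_of_perturbation {n : ℕ} {μ : ℂ} {e : ℂ[X]} {r : ℝ}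
    (he : e.natDegree ≤ n) (hr₀ : 0 ≤ r) (hr₁ : r ≤ 1) (hrμ : (n + 2) * r < ‖μ‖)
    (hε : ∑ i ∈ range (n + 1), ‖e.coeff i‖ < r ^ (n + 1)) :
    ∃ l, rootMultiplicity l (X ^ n * (X + C μ) + e) = 1 ∧ ‖l + μ‖ < r ∧
      ∀ z, (X ^ n * (X + C μ) + e).IsRoot z → z = l ∨ ‖z‖ < r := by
  classical
  set p := X ^ n * (X + C μ) + e
  have hp : IsMonicOfDegree p (n + 1) :=
    ((isMonicOfDegree_X_pow ℂ n).mul (isMonicOfDegree_X_add_one μ)).add_right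
      (Nat.lt_succ_of_le he)
  have hsum : ‖p.roots.sum + μ‖ ≤ ∑ i ∈ range (n + 1), ‖e.coeff i‖ := by
    have hnext : p.coeff n = -p.roots.sum := by
      simpa [nextCoeff_of_natDegree_pos, hp.natDegree_eq] using
        (IsAlgClosed.splits p).nextCoeff_eq_neg_sum_roots_of_monic hp.monic
    have hcoeff : p.coeff n = μ + e.coeff n := by
      simp [p, mul_add, coeff_X_pow_mul', coeff_X]
    rw [show p.roots.sum + μ = -e.coeff n by linear_combination hnext - hcoeff, norm_neg]
    exact single_le_sum (f := fun i => ‖e.coeff i‖) (fun _ _ => norm_nonneg _)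
      (self_mem_range_succ n)
  have hroots : ∀ z ∈ p.roots, ‖z‖ < r ∨ ‖z + μ‖ < r := fun z hz =>
    norm_lt_or_norm_add_lt_of_isRoot he hr₀ hr₁ hε (mem_roots'.1 hz).2
  have hcard : Multiset.card (p.roots.filter fun z => ‖z + μ‖ < r) = 1 := by
    refine Multiset.card_filter_norm_add_lt_eq_one hroots hsum ?_
    rw [IsAlgClosed.card_roots_eq_natDegree, hp.natDegree_eq]
    have : r ^ (n + 1) ≤ r := pow_le_of_le_one hr₀ hr₁ n.succ_ne_zero
    push_cast
    linarith
  obtain ⟨l, hl⟩ := Multiset.card_eq_one.1 hcard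
  have hmem : ∀ z, z ∈ p.roots.filter (fun z => ‖z + μ‖ < r) ↔ z = l := by simp [hl]
  have hl_near : ‖l + μ‖ < r := (Multiset.mem_filter.1 ((hmem l).2 rfl)).2
  refine ⟨l, ?_, hl_near, fun z hz => ?_⟩
  · rw [← count_roots, ← Multiset.filter_add_not (fun z => ‖z + μ‖ < r) p.roots,
      Multiset.count_add, hl, Multiset.count_singleton_self, Multiset.count_eq_zero.2]
    exact fun h => (Multiset.mem_filter.1 h).2 hl_near
  · have hz' : z ∈ p.roots := mem_roots'.2 ⟨hp.ne_zero, hz⟩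
    exact (hroots z hz').symm.imp_left fun h => (hmem z).1 (Multiset.mem_filter.2 ⟨hz', h⟩)

end Polynomial

namespace Matrix

variable {ι T : Type*} [Fintype ι] [DecidableEq ι] [TopologicalSpace T]

theorem continuousAt_charpoly_coeff {R : Type*} [CommRing R] [TopologicalSpace R]
    [IsTopologicalRing R] {M : T → Matrix ι ι R} {x₀ : T} (hM : ContinuousAt M x₀) (i : ℕ) :
    ContinuousAt (fun x => (M x).charpoly.coeff i) x₀ := by
  have heval : ∀ x, (M x).charpoly.coeff i
      = MvPolynomial.eval (fun ij : ι × ι => M x ij.1 ij.2) ((charpoly.univ R ι).coeff i) :=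
    fun x => by rw [MvPolynomial.eval, charpoly.univ_coeff_eval₂Hom]; rfl
  simp_rw [heval]
  exact (MvPolynomial.continuous_eval _).continuousAt.comp
    (continuousAt_pi.2 fun ij => continuousAt_pi.1 (continuousAt_pi.1 hM ij.1) ij.2)

theorem eventually_exists_rootMultiplicity_charpoly_eq_one {M : T → Matrix ι ι ℂ} {x₀ : T}
    (hM : ContinuousAt M x₀) {n : ℕ} {μ : ℂ} (hμ : μ ≠ 0)
    (h₀ : (M x₀).charpoly = X ^ n * (X + C μ)) {r : ℝ} (hr : 0 < r) :
    ∀ᶠ x in 𝓝 x₀, ∃ l, rootMultiplicity l (M x).charpoly = 1 ∧ ‖l + μ‖ < r ∧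
      ∀ z, (M x).charpoly.IsRoot z → z = l ∨ ‖z‖ < r := by
  set r' : ℝ := min (min r 1) (‖μ‖ / (n + 3))
  have hr' : 0 < r' := lt_min (lt_min hr one_pos) (by positivity)
  have hr'μ : (n + 2) * r' < ‖μ‖ := by
    calc (n + 2) * r' < (n + 3) * r' := by gcongr; linarith
      _ ≤ (n + 3) * (‖μ‖ / (n + 3)) := by gcongr; exact min_le_right _ _
      _ = ‖μ‖ := mul_div_cancel₀ _ (by positivity)
  have hp₀ : IsMonicOfDegree (X ^ n * (X + C μ)) (n + 1) :=
    (isMonicOfDegree_X_pow ℂ n).mul (isMonicOfDegree_X_add_one μ)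
  have hchar : ∀ x, IsMonicOfDegree (M x).charpoly (n + 1) := fun x =>
    ⟨by rw [charpoly_natDegree_eq_dim, ← (M x₀).charpoly_natDegree_eq_dim, h₀, hp₀.natDegree_eq],
      charpoly_monic _⟩
  have hsmall : ∀ᶠ x in 𝓝 x₀,
      ∑ i ∈ range (n + 1), ‖((M x).charpoly - X ^ n * (X + C μ)).coeff i‖ < r' ^ (n + 1) := by
    refine ContinuousAt.eventually_lt ?_ continuousAt_const (by simp [h₀]; positivity)
    simp_rw [coeff_sub]
    exact tendsto_finsetSum _ fun i _ =>
      ((continuousAt_charpoly_coeff hM i).sub continuousAt_const).norm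
  filter_upwards [hsmall] with x hx
  have he := Nat.lt_succ_iff.1 ((hchar x).natDegree_sub_lt n.succ_ne_zero hp₀)
  obtain ⟨l, hl, hl_near, hl_unique⟩ :=
    exists_rootMultiplicity_eq_one_of_perturbation he hr'.le ((min_le_left _ _).trans
      (min_le_right _ _)) hr'μ hx
  rw [add_sub_cancel] at hl hl_unique
  have hr'r : r' ≤ r := (min_le_left _ _).trans (min_le_left _ _)
  exact ⟨l, hl, hl_near.trans_le hr'r, fun z hz => (hl_unique z hz).imp_right (·.trans_le hr'r)⟩

end Matrix

theorem continuous_symbolMatrix (α β γr γi c d a q ρ : ℝ) :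
    Continuous (symbolMatrix α β γr γi c d a q ρ) := by
  have hsqrt : ∀ k : ℝ, ((Real.sqrt (1 + k ^ 2) : ℝ) : ℂ) ≠ 0 := fun k =>
    Complex.ofReal_ne_zero.2 (Real.sqrt_pos.2 (by positivity)).ne'
  refine continuous_pi fun i => continuous_pi fun j => ?_
  fin_cases i <;> fin_cases j <;> simp [symbolMatrix] <;> fun_prop (disch := exact hsqrt _)

theorem charpoly_symbolMatrix_zero (α β γr γi c d a q ρ : ℝ) :
    (symbolMatrix α β γr γi c d a q ρ 0).charpoly
      = X ^ 2 * (X + C ((2 * Real.exp (2 * ρ) : ℝ) : ℂ)) := by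
  rw [Matrix.charpoly, Matrix.det_fin_three]
  simp [symbolMatrix]
  ring

theorem symbol_low_frequency_spectral_gap_general (α β γr γi c d a q ρ : ℝ) :
    ∃ δΛ : ℝ, δΛ ∈ Set.Ioo (0:ℝ) 1 ∧
      ∃ cs : ℝ, 0 < cs ∧
        ∀ k : ℝ, |k| < δΛ →
          ∃ lam1 : ℂ,
            (Matrix.charpoly (symbolMatrix α β γr γi c d a q ρ k)).IsRoot lam1 ∧
            lam1.re ≤ -cs ∧
            Polynomial.rootMultiplicity lam1
              (Matrix.charpoly (symbolMatrix α β γr γi c d a q ρ k)) = 1 ∧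
            ∀ mu : ℂ,
              (Matrix.charpoly (symbolMatrix α β γr γi c d a q ρ k)).IsRoot mu →
              mu.re ≤ -cs → mu = lam1 := by
  set m := 2 * Real.exp (2 * ρ)
  have hm : 0 < m := by positivity
  obtain ⟨δ, hδ, hgap⟩ := Metric.eventually_nhds_iff.1 <|
    Matrix.eventually_exists_rootMultiplicity_charpoly_eq_one
      (continuous_symbolMatrix α β γr γi c d a q ρ).continuousAt
      (Complex.ofReal_ne_zero.2 hm.ne') (charpoly_symbolMatrix_zero α β γr γi c d a q ρ)
      (half_pos hm)
  refine ⟨min δ (1 / 2), ⟨by positivity, by linarith [min_le_right δ (1 / 2)]⟩, m / 2,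
    half_pos hm, fun k hk => ?_⟩
  obtain ⟨l, hl, hl_near, hl_unique⟩ :=
    hgap (by simpa [Real.dist_eq] using hk.trans_le (min_le_left _ _))
  have hl_re : l.re + m < m / 2 := by
    simpa using (Complex.re_le_norm (l + m)).trans_lt hl_near
  refine ⟨l, (rootMultiplicity_pos (Matrix.charpoly_monic _).ne_zero).1 (by omega), by linarith,
    hl, fun z hz hz_re => (hl_unique z hz).resolve_right fun hz_small => ?_⟩
  have := (Complex.abs_re_le_norm z).trans_lt hz_small
  rw [abs_lt] at this
  linarith

/-- Spectral separation at low frequencies: there are `δ_Λ ∈ (0,1)` and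
`c_{Λ,s} > 0` such that for all `|k| < δ_Λ` the set of eigenvalues `λ` of `Λ̂(k)` with
`Re λ ≤ -c_{Λ,s}` consists of exactly one element `λ₁(k)`, which is a simple root of the
characteristic polynomial of `Λ̂(k)`. -/
theorem symbol_low_frequency_spectral_gap (α β γr γi c d a q ρ : ℝ) (ha : 0 < a) :
    ∃ δΛ : ℝ, δΛ ∈ Set.Ioo (0:ℝ) 1 ∧
      ∃ cs : ℝ, 0 < cs ∧
        ∀ k : ℝ, |k| < δΛ →
          ∃ lam1 : ℂ,
            (Matrix.charpoly (symbolMatrix α β γr γi c d a q ρ k)).IsRoot lam1 ∧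
            lam1.re ≤ -cs ∧
            Polynomial.rootMultiplicity lam1
              (Matrix.charpoly (symbolMatrix α β γr γi c d a q ρ k)) = 1 ∧
            ∀ mu : ℂ,
              (Matrix.charpoly (symbolMatrix α β γr γi c d a q ρ k)).IsRoot mu →
              mu.re ≤ -cs → mu = lam1 :=
  symbol_low_frequency_spectral_gap_general α β γr γi c d a q ρ
end

section
/- Fix real parameters α, β, γ_r, γ_i, c, d, q, ρ. Let L′ be the 3×3 real matrix [[-2αq, -α, 0], [-2βe^{2ρ}, -2αq, γ_i], [2de^{2ρ}, 0, c]] (which equals (1/i) times the derivative of the symbol Λ̂(k) at k = 0), let P_c = [[0, -qe^{-2ρ}, γ_r e^{-2ρ}/2], [0, 1, 0], [0, 0, 1]] (the spectral projection of Λ̂(0) complementary to the eigenvalue -2e^{2ρ}), and let S = [[1, -qe^{-2ρ}, γ_r e^{-2ρ}/2], [0, 1, 0], [0, 0, 1]]. Then S is invertible and S⁻¹ (P_c L′ P_c) S = [[0, 0, 0], [0, 2q(β-α), γ_i - βγ_r], [0, -2dq, c + dγ_r]]; in particular, the lower-right 2×2 block is the coefficient matrix of the linearized Whitham modulation equations.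 -/
set_option maxHeartbeats 1000000 in
/-- The reduced long-wave symbol: with
`L′ = (1/i)Λ̂′(0)`, `P_c` the spectral projection of `Λ̂(0)` complementary to the eigenvalue
`-2e^{2ρ}`, and the basis-change matrix `S`, the matrix `S` is invertible and
`S⁻¹ (P_c L′ P_c) S` is block diagonal with lower-right `2×2` block
`[[2q(β-α), γᵢ - βγᵣ], [-2dq, c + dγᵣ]]`, the coefficient matrix of the linearized Whitham
modulation equations. -/
theorem reduced_symbol_block_diagonalization (α β γr γi c d q ρ : ℝ) :
    IsUnit
      (!![1, -(q * Real.exp (-(2 * ρ))), γr * Real.exp (-(2 * ρ)) / 2;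
          0, 1, 0;
          0, 0, 1] : Matrix (Fin 3) (Fin 3) ℝ) ∧
    (!![1, -(q * Real.exp (-(2 * ρ))), γr * Real.exp (-(2 * ρ)) / 2;
        0, 1, 0;
        0, 0, 1] : Matrix (Fin 3) (Fin 3) ℝ)⁻¹ *
      ((!![0, -(q * Real.exp (-(2 * ρ))), γr * Real.exp (-(2 * ρ)) / 2;
           0, 1, 0;
           0, 0, 1] : Matrix (Fin 3) (Fin 3) ℝ) *
        (!![-(2 * α * q), -α, 0;
            -(2 * β * Real.exp (2 * ρ)), -(2 * α * q), γi;
            2 * d * Real.exp (2 * ρ), 0, c] : Matrix (Fin 3) (Fin 3) ℝ) *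
        (!![0, -(q * Real.exp (-(2 * ρ))), γr * Real.exp (-(2 * ρ)) / 2;
            0, 1, 0;
            0, 0, 1] : Matrix (Fin 3) (Fin 3) ℝ)) *
      (!![1, -(q * Real.exp (-(2 * ρ))), γr * Real.exp (-(2 * ρ)) / 2;
          0, 1, 0;
          0, 0, 1] : Matrix (Fin 3) (Fin 3) ℝ) =
      !![0, 0, 0;
         0, 2 * q * (β - α), γi - β * γr;
         0, -(2 * d * q), c + d * γr] := by
  set S : Matrix (Fin 3) (Fin 3) ℝ :=
    !![1, -(q * Real.exp (-(2 * ρ))), γr * Real.exp (-(2 * ρ)) / 2;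
       0, 1, 0; 0, 0, 1]
  set T : Matrix (Fin 3) (Fin 3) ℝ :=
    !![1, q * Real.exp (-(2 * ρ)), -(γr * Real.exp (-(2 * ρ)) / 2);
       0, 1, 0; 0, 0, 1]
  have hTS : T * S = 1 := by
    ext i j
    fin_cases i <;> fin_cases j <;>
      simp [S, T, Matrix.mul_apply, Fin.sum_univ_succ, Matrix.one_apply,
        Matrix.vecHead, Matrix.vecTail] <;> ring
  have hinv : S⁻¹ = T := Matrix.inv_eq_left_inv hTS
  have hdet : S.det = 1 := by
    simp [S, Matrix.det_fin_three, Matrix.vecHead, Matrix.vecTail]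
  constructor
  · exact (Matrix.isUnit_iff_isUnit_det S).mpr (by simp [hdet])
  · rw [hinv]
    ext i j
    fin_cases i <;> fin_cases j <;>
      simp [S, T, Matrix.mul_apply, Fin.sum_univ_succ, Matrix.vecHead,
        Matrix.vecTail, Real.exp_neg] <;>
      field_simp <;> ring
end

section
/- Let T, a, b, c₀, d₀, K > 0. Then there exist constants M_s, M_c > 0, independent of ε, such that for every ε ∈ (0,1] and all continuously differentiable nonnegative functions E, F : [0, T/ε] → ℝ with E(0) = F(0) = 0 satisfying the differential inequalities E′(t) ≤ -a E(t) + b F(t) + c₀ ε and F′(t) ≤ d₀ ε (E(t) + F(t)) + K ε for all t ∈ [0, T/ε], one has sup_{t ∈ [0,T/ε]} E(t) ≤ M_s and sup_{t ∈ [0,T/ε]} F(t) ≤ M_c. -/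
open Set Filter
open scoped Topology

/-!
With `θ = a / b`, consider `Ψ = max (θ E) F`. Where `θ E` realises the maximum, `b F ≤ a E`, so
the coupling is absorbed by the damping and `θ E' ≤ θ c₀ ε`; the center equation gives
`F' ≤ d₀ ε (1 + θ⁻¹) Ψ + K ε` everywhere. Hence the upper right Dini derivative of `Ψ` is at
most `C ε Ψ + C' ε` with `C = d₀ (1 + θ⁻¹)`, `C' = θ c₀ + K`, and Grönwall's inequality on
`[0, T / ε]` bounds `Ψ` by `gronwallBound 0 (C ε) (C' ε) (T / ε) = gronwallBound 0 C C' T`,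
which does not depend on `ε`.
-/

theorem slope_max_le_max_slope (f g : ℝ → ℝ) {x z : ℝ} (hxz : x < z) :
    slope (fun y => max (f y) (g y)) x z ≤ max (slope f x z) (slope g x z) := by
  simp only [slope_def_field]
  rw [max_div_div_right (sub_pos.2 hxz).le]
  exact div_le_div_of_nonneg_right (max_sub_max_le_max _ _ _ _) (sub_pos.2 hxz).le

theorem eventually_slope_max_lt {f g : ℝ → ℝ} {f' g' B r x : ℝ}
    (hf : HasDerivWithinAt f f' (Ioi x) x) (hg : HasDerivWithinAt g g' (Ioi x) x)
    (hf' : g x ≤ f x → f' ≤ B) (hg' : f x ≤ g x → g' ≤ B) (hr : B < r) :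
    ∀ᶠ z in 𝓝[>] x, slope (fun y => max (f y) (g y)) x z < r := by
  have hsf := (hasDerivWithinAt_iff_tendsto_slope' (lt_irrefl x)).1 hf
  have hsg := (hasDerivWithinAt_iff_tendsto_slope' (lt_irrefl x)).1 hg
  rcases lt_trichotomy (f x) (g x) with hlt | heq | hgt
  · filter_upwards [hf.continuousWithinAt.eventually_lt hg.continuousWithinAt hlt,
      hsg.eventually (gt_mem_nhds ((hg' hlt.le).trans_lt hr))] with z hz hzr
    simpa only [slope_def_field, max_eq_right hz.le, max_eq_right hlt.le] using hzr
  · filter_upwards [self_mem_nhdsWithin, hsf.eventually (gt_mem_nhds ((hf' heq.ge).trans_lt hr)),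
      hsg.eventually (gt_mem_nhds ((hg' heq.le).trans_lt hr))] with z hxz hfz hgz
    exact (slope_max_le_max_slope f g hxz).trans_lt (max_lt hfz hgz)
  · filter_upwards [hg.continuousWithinAt.eventually_lt hf.continuousWithinAt hgt,
      hsf.eventually (gt_mem_nhds ((hf' hgt.le).trans_lt hr))] with z hz hzr
    simpa only [slope_def_field, max_eq_left hz.le, max_eq_left hgt.le] using hzr

theorem max_le_gronwallBound {f g f' g' : ℝ → ℝ} {δ K ε a b : ℝ}
    (hf : ∀ x ∈ Icc a b, HasDerivWithinAt f (f' x) (Icc a b) x)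
    (hg : ∀ x ∈ Icc a b, HasDerivWithinAt g (g' x) (Icc a b) x)
    (ha : max (f a) (g a) ≤ δ)
    (hf' : ∀ x ∈ Ico a b, g x ≤ f x → f' x ≤ K * max (f x) (g x) + ε)
    (hg' : ∀ x ∈ Ico a b, f x ≤ g x → g' x ≤ K * max (f x) (g x) + ε) :
    ∀ x ∈ Icc a b, max (f x) (g x) ≤ gronwallBound δ K ε (x - a) := by
  refine le_gronwallBound_of_liminf_deriv_right_le
    (fun x hx => (hf x hx).continuousWithinAt.max (hg x hx).continuousWithinAt) ?_ ha
    (fun _ _ => le_rfl)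
  intro x hx r hr
  have hs : Icc a b ∈ 𝓝[>] x := Icc_mem_nhdsGT_of_mem hx
  exact (eventually_slope_max_lt ((hf x (Ico_subset_Icc_self hx)).mono_of_mem_nhdsWithin hs)
    ((hg x (Ico_subset_Icc_self hx)).mono_of_mem_nhdsWithin hs) (hf' x hx) (hg' x hx) hr).frequently

theorem gronwallBound_mul_mul (δ K ε x : ℝ) {c : ℝ} (hc : c ≠ 0) :
    gronwallBound δ (K * c) (ε * c) x = gronwallBound δ K ε (c * x) := by
  simp only [gronwallBound, mul_eq_zero, hc, or_false, mul_div_mul_right _ _ hc]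
  ring_nf

theorem gronwallBound_zero_pos {K ε x : ℝ} (hK : 0 < K) (hε : 0 < ε) (hx : 0 < x) :
    0 < gronwallBound 0 K ε x := by
  have : 1 < Real.exp (K * x) := Real.one_lt_exp_iff.2 (by positivity)
  simp only [gronwallBound_of_K_ne_0 hK.ne', zero_mul, zero_add]
  exact mul_pos (div_pos hε hK) (sub_pos.2 this)

theorem max_weighted_energy_le_gronwallBound {a b c d k θ L : ℝ} {E F E' F' : ℝ → ℝ}
    (hθ : 0 < θ) (hb : 0 ≤ b) (hbθ : b * θ ≤ a) (hc : 0 ≤ c) (hd : 0 ≤ d) (hk : 0 ≤ k)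
    (hE : ∀ t ∈ Icc 0 L, HasDerivWithinAt E (E' t) (Icc 0 L) t)
    (hF : ∀ t ∈ Icc 0 L, HasDerivWithinAt F (F' t) (Icc 0 L) t)
    (hE_nonneg : ∀ t ∈ Icc 0 L, 0 ≤ E t) (hE₀ : E 0 = 0) (hF₀ : F 0 = 0)
    (hE' : ∀ t ∈ Icc 0 L, E' t ≤ -(a * E t) + b * F t + c)
    (hF' : ∀ t ∈ Icc 0 L, F' t ≤ d * (E t + F t) + k) :
    ∀ t ∈ Icc 0 L, max (θ * E t) (F t) ≤ gronwallBound 0 (d * (1 + θ⁻¹)) (θ * c + k) t := by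
  have stable : ∀ x ∈ Ico 0 L, F x ≤ θ * E x →
      θ * E' x ≤ d * (1 + θ⁻¹) * max (θ * E x) (F x) + (θ * c + k) := by
    intro x hx hFE
    have hx := Ico_subset_Icc_self hx
    have hEx := hE_nonneg x hx
    have hE'x : E' x ≤ c := by
      nlinarith [hE' x hx, mul_le_mul_of_nonneg_left hFE hb, mul_nonneg (sub_nonneg.2 hbθ) hEx]
    have hΨ : 0 ≤ d * (1 + θ⁻¹) * max (θ * E x) (F x) := by
      have : 0 ≤ max (θ * E x) (F x) := le_max_of_le_left (mul_nonneg hθ.le hEx)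
      positivity
    nlinarith [mul_le_mul_of_nonneg_left hE'x hθ.le]
  have center : ∀ x ∈ Ico 0 L, θ * E x ≤ F x →
      F' x ≤ d * (1 + θ⁻¹) * max (θ * E x) (F x) + (θ * c + k) := by
    intro x hx _
    have hx := Ico_subset_Icc_self hx
    have hEΨ : E x ≤ θ⁻¹ * max (θ * E x) (F x) := by
      rw [le_inv_mul_iff₀ hθ]
      exact le_max_left _ _
    calc F' x ≤ d * (E x + F x) + k := hF' x hx
      _ ≤ d * (θ⁻¹ * max (θ * E x) (F x) + max (θ * E x) (F x)) + k := by
        gcongr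
        exact le_max_right _ _
      _ ≤ d * (1 + θ⁻¹) * max (θ * E x) (F x) + (θ * c + k) := by
        linarith [mul_nonneg hθ.le hc]
  intro t ht
  simpa only [sub_zero] using max_le_gronwallBound (fun t ht => (hE t ht).const_mul θ) hF
    (by simp [hE₀, hF₀]) stable center t ht

/-- Grönwall-type comparison for the coupled energy inequalities: given
`T, a, b, c₀, d₀, K > 0` there are `M_s, M_c > 0`, independent of `ε`, such that for every
`ε ∈ (0,1]` and all continuously differentiable nonnegative `E, F : [0,T/ε] → ℝ` with
`E(0) = F(0) = 0`, `E′ ≤ -aE + bF + c₀ε` and `F′ ≤ d₀ε(E + F) + Kε` on `[0,T/ε]`, one has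
`E ≤ M_s` and `F ≤ M_c` on `[0,T/ε]`. -/
theorem coupled_energy_gronwall (T a b c₀ d₀ K : ℝ)
    (hT : 0 < T) (ha : 0 < a) (hb : 0 < b) (hc₀ : 0 < c₀) (hd₀ : 0 < d₀) (hK : 0 < K) :
    ∃ Ms Mc : ℝ, 0 < Ms ∧ 0 < Mc ∧
      ∀ ε : ℝ, ε ∈ Set.Ioc (0:ℝ) 1 →
        ∀ E F E' F' : ℝ → ℝ,
          (∀ t ∈ Set.Icc (0:ℝ) (T / ε), HasDerivWithinAt E (E' t) (Set.Icc 0 (T / ε)) t) →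
          (∀ t ∈ Set.Icc (0:ℝ) (T / ε), HasDerivWithinAt F (F' t) (Set.Icc 0 (T / ε)) t) →
          ContinuousOn E' (Set.Icc 0 (T / ε)) →
          ContinuousOn F' (Set.Icc 0 (T / ε)) →
          (∀ t ∈ Set.Icc (0:ℝ) (T / ε), 0 ≤ E t) →
          (∀ t ∈ Set.Icc (0:ℝ) (T / ε), 0 ≤ F t) →
          E 0 = 0 → F 0 = 0 →
          (∀ t ∈ Set.Icc (0:ℝ) (T / ε), E' t ≤ -(a * E t) + b * F t + c₀ * ε) →
          (∀ t ∈ Set.Icc (0:ℝ) (T / ε), F' t ≤ d₀ * ε * (E t + F t) + K * ε) →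
          (∀ t ∈ Set.Icc (0:ℝ) (T / ε), E t ≤ Ms) ∧
          (∀ t ∈ Set.Icc (0:ℝ) (T / ε), F t ≤ Mc) := by
  set θ := a / b
  set M := gronwallBound 0 (d₀ * (1 + θ⁻¹)) (θ * c₀ + K) T
  have hθ : 0 < θ := div_pos ha hb
  have hM : 0 < M := gronwallBound_zero_pos (by positivity) (by positivity) hT
  refine ⟨M / θ, M, div_pos hM hθ, hM, ?_⟩
  rintro ε ⟨hε, -⟩ E F E' F' hE hF - - hE_nonneg - hE₀ hF₀ hE' hF'
  have hΨ : ∀ t ∈ Icc 0 (T / ε), max (θ * E t) (F t) ≤ M := fun t ht => calc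
    max (θ * E t) (F t) ≤ gronwallBound 0 (d₀ * ε * (1 + θ⁻¹)) (θ * (c₀ * ε) + K * ε) t :=
        max_weighted_energy_le_gronwallBound hθ hb.le (mul_div_cancel₀ a hb.ne').le
          (by positivity) (by positivity) (by positivity) hE hF hE_nonneg hE₀ hF₀ hE' hF' t ht
    _ = gronwallBound 0 (d₀ * (1 + θ⁻¹)) (θ * c₀ + K) (ε * t) := by
        rw [← gronwallBound_mul_mul _ _ _ _ hε.ne']
        ring_nf
    _ ≤ M := gronwallBound_mono le_rfl (by positivity) (by positivity)
        ((le_div_iff₀' hε).1 ht.2)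
  exact ⟨fun t ht => (le_div_iff₀' hθ).2 ((le_max_left _ _).trans (hΨ t ht)),
    fun t ht => (le_max_right _ _).trans (hΨ t ht)⟩
end
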